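/- arXiv:math/0611361 — 2 statements merged into one kernel-verified Lean document; each statement's English description precedes it below -/
import Mathlib

section
/- Let {c_n} be a nonnegative sequence in NBVS and let ε_m = sup_{k ≥ m} k·c_k be finite. Then for all N ≥ m, ∑_{k=N}^{∞} |c_k - c_{k+1}| ≤ K·ε_m / N, where K depends only on the NBVS constant. -/
/-!
On a dyadic block `[P, 2P)` with `P ≥ m`, the NBVS condition together with `c k ≤ ε / k` bounds
the variation by `(3/2)|K| ε / P`. The blocks `[2ⁱN, 2ⁱ⁺¹N)` cover the tail from `N`, and their
bounds form a geometric series summing to `3|K| ε / N`.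
-/

open Finset

section DyadicBlocks

variable {f : ℕ → ℝ} {A : ℝ}

theorem sum_Ico_two_pow_mul_le_of_dyadic_block_le (hA : 0 ≤ A) (j : ℕ) :
    ∀ N : ℕ, (∀ P, N ≤ P → ∑ k ∈ Ico P (2 * P), f k ≤ A / P) →
      ∑ k ∈ Ico N (2 ^ j * N), f k ≤ 2 * A / N := by
  induction j with
  | zero => intro N _; simp only [pow_zero, one_mul, Ico_self, sum_empty]; positivity
  | succ j ih =>
    intro N hblock
    have hsplit : 2 ^ (j + 1) * N = 2 ^ j * (2 * N) := by ring
    rw [hsplit, ← sum_Ico_consecutive f (by omega : N ≤ 2 * N)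
      (Nat.le_mul_of_pos_left _ (Nat.two_pow_pos j))]
    calc ∑ k ∈ Ico N (2 * N), f k + ∑ k ∈ Ico (2 * N) (2 ^ j * (2 * N)), f k
        ≤ A / N + 2 * A / ((2 * N : ℕ) : ℝ) :=
          add_le_add (hblock N le_rfl) (ih (2 * N) fun P hP => hblock P (by omega))
      _ = 2 * A / N := by push_cast; ring

theorem tsum_shift_le_of_dyadic_block_le (hf : ∀ k, 0 ≤ f k) (hA : 0 ≤ A) {N : ℕ} (hN : 1 ≤ N)
    (hblock : ∀ P, N ≤ P → ∑ k ∈ Ico P (2 * P), f k ≤ A / P) :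
    ∑' k, f (N + k) ≤ 2 * A / N := by
  refine Real.tsum_le_of_sum_range_le (fun k => hf _) fun n => ?_
  have hlen : N + n ≤ 2 ^ n * N :=
    calc N + n ≤ (n + 1) * N := by nlinarith
      _ ≤ 2 ^ n * N := Nat.mul_le_mul_right N Nat.lt_two_pow_self
  calc ∑ i ∈ range n, f (N + i) = ∑ k ∈ Ico N (N + n), f k := by
        rw [sum_Ico_eq_sum_range, Nat.add_sub_cancel_left]
    _ ≤ ∑ k ∈ Ico N (2 ^ n * N), f k :=
        sum_le_sum_of_subset_of_nonneg (Ico_subset_Ico_right hlen) fun i _ _ => hf i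
    _ ≤ 2 * A / N := sum_Ico_two_pow_mul_le_of_dyadic_block_le hA n N hblock

end DyadicBlocks

theorem nbvs_dyadic_block_le {c : ℕ → ℝ} (hpos : ∀ n, 0 ≤ c n) {K : ℝ}
    (hNBVS : ∀ m : ℕ, 1 ≤ m →
      ∑ k ∈ Icc m (2 * m), |c k - c (k + 1)| ≤ K * (c m + c (2 * m)))
    {m : ℕ} (hm : 1 ≤ m) {ε : ℝ} (hε : ∀ k : ℕ, m ≤ k → (k : ℝ) * c k ≤ ε)
    {P : ℕ} (hP : m ≤ P) :
    ∑ k ∈ Ico P (2 * P), |c k - c (k + 1)| ≤ 3 / 2 * |K| * ε / P := by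
  have hc : ∀ k, m ≤ k → c k ≤ ε / k := fun k hk => by
    rw [le_div_iff₀ (by norm_cast; omega), mul_comm]
    exact hε k hk
  calc ∑ k ∈ Ico P (2 * P), |c k - c (k + 1)|
      ≤ ∑ k ∈ Icc P (2 * P), |c k - c (k + 1)| :=
        sum_le_sum_of_subset_of_nonneg Ico_subset_Icc_self fun _ _ _ => abs_nonneg _
    _ ≤ K * (c P + c (2 * P)) := hNBVS P (hm.trans hP)
    _ ≤ |K| * (c P + c (2 * P)) :=
        mul_le_mul_of_nonneg_right (le_abs_self K) (add_nonneg (hpos _) (hpos _))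
    _ ≤ |K| * (ε / P + ε / ((2 * P : ℕ) : ℝ)) := by
        gcongr
        · exact hc P hP
        · exact hc (2 * P) (by omega)
    _ = 3 / 2 * |K| * ε / P := by push_cast; ring

theorem nbvs_tail_variation_bound (c : ℕ → ℝ) (hpos : ∀ n, 0 ≤ c n) (K : ℝ)
    (hNBVS : ∀ m : ℕ, 1 ≤ m →
      ∑ k ∈ Finset.Icc m (2 * m), |c k - c (k + 1)| ≤ K * (c m + c (2 * m))) :
    ∃ K' : ℝ, 0 < K' ∧ ∀ m : ℕ, 1 ≤ m → ∀ ε : ℝ,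
      (∀ k : ℕ, m ≤ k → (k : ℝ) * c k ≤ ε) →
      ∀ N : ℕ, m ≤ N →
        ∑' k : ℕ, |c (N + k) - c (N + k + 1)| ≤ K' * ε / N := by
  refine ⟨3 * |K| + 1, by positivity, fun m hm ε hε N hN => ?_⟩
  have hε0 : 0 ≤ ε := (mul_nonneg m.cast_nonneg (hpos m)).trans (hε m le_rfl)
  calc ∑' k : ℕ, |c (N + k) - c (N + k + 1)|
      ≤ 2 * (3 / 2 * |K| * ε) / N :=
        tsum_shift_le_of_dyadic_block_le (fun k => abs_nonneg _) (by positivity) (hm.trans hN)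
          fun P hP => nbvs_dyadic_block_le hpos hNBVS hm hε (hN.trans hP)
    _ ≤ (3 * |K| + 1) * ε / N := by gcongr ?_ / _; nlinarith [abs_nonneg K]
end

section
/- Let {c_n} be a nonnegative sequence in NBVS with sup_{k≥m} k·c_k < ∞. Then uniformly in x ∈ [0, π] and m ≥ 1, |∑_{k=m}^{∞} c_k sin(kx)| ≤ K · sup_{k ≥ m} k·c_k, where K depends only on the NBVS constant of {c_n}. -/
/-!
Split the sine series at `N ≈ max m (1 / x)`. Below `N` use `|sin (k x)| ≤ k x`: at most `1 / x + 1`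
terms, each of size at most `ε x`. Beyond `N` use Abel summation against the Dirichlet kernel,
whose partial sums are `O(1 / x) = O(N)`; the NBVS condition, applied on the dyadic blocks
`[2^j N, 2^(j+1) N]` where `c_k ≤ ε / k`, bounds the total variation of the tail by `3 K ε / N`.
-/

open Real Finset

-- Dirichlet's bound `|∑ sin (k x)| ≤ 1 / sin (x / 2)`, combined with Jordan's inequality.
theorem abs_sum_Ico_sin_mul_le {x : ℝ} (hx₀ : 0 < x) (hxπ : x ≤ π) (a b : ℕ) :
    |∑ k ∈ Ico a b, sin (k * x)| ≤ π / x := by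
  rcases lt_or_ge b a with hba | hab
  · rw [Ico_eq_empty_of_le hba.le, sum_empty, abs_zero]
    positivity
  have hjordan : x / π ≤ sin (x / 2) := by
    have := mul_le_sin (x := x / 2) (by linarith) (by linarith)
    rwa [show 2 / π * (x / 2) = x / π by ring] at this
  set g : ℕ → ℝ := fun k => -cos ((k - 1 / 2) * x)
  have hstep : ∀ k : ℕ, sin (k * x) * (2 * sin (x / 2)) = g (k + 1) - g k := by
    intro k
    simp only [g, Nat.cast_add, Nat.cast_one, neg_sub_neg, cos_sub_cos]
    rw [show ((k - 1 / 2) * x + (k + 1 - 1 / 2) * x) / 2 = k * x by ring,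
      show ((k - 1 / 2) * x - (k + 1 - 1 / 2) * x) / 2 = -(x / 2) by ring, sin_neg]
    ring
  have hsum : (∑ k ∈ Ico a b, sin (k * x)) * (2 * sin (x / 2)) = g b - g a := by
    rw [sum_mul, sum_congr rfl fun k _ => hstep k, sum_Ico_sub g hab]
  have hg : |g b - g a| ≤ 2 := by
    have := abs_sub (g b) (g a)
    simp only [g, abs_neg] at this
    linarith [abs_cos_le_one ((b - 1 / 2 : ℝ) * x), abs_cos_le_one ((a - 1 / 2 : ℝ) * x)]
  have hs : 0 < 2 * sin (x / 2) := by linarith [div_pos hx₀ pi_pos]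
  refine le_of_mul_le_mul_right ?_ hs
  calc |∑ k ∈ Ico a b, sin (k * x)| * (2 * sin (x / 2)) = |g b - g a| := by
        rw [← hsum, abs_mul, abs_of_pos hs]
    _ ≤ π / x * (2 * (x / π)) := by rw [show π / x * (2 * (x / π)) = 2 by field_simp]; exact hg
    _ ≤ π / x * (2 * sin (x / 2)) := by gcongr

theorem abs_sum_Ico_mul_le_of_abs_sum_range_le {f g : ℕ → ℝ} {B : ℝ}
    (hg : ∀ n, |∑ i ∈ range n, g i| ≤ B) {m n : ℕ} (hmn : m < n) :
    |∑ i ∈ Ico m n, f i * g i| ≤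
      (|f (n - 1)| + |f m| + ∑ i ∈ Ico m (n - 1), |f i - f (i + 1)|) * B := by
  have hparts := sum_Ico_by_parts f g hmn
  simp only [smul_eq_mul] at hparts
  have hvar : |∑ i ∈ Ico m (n - 1), (f (i + 1) - f i) * ∑ j ∈ range (i + 1), g j| ≤
      ∑ i ∈ Ico m (n - 1), |f i - f (i + 1)| * B := by
    refine (abs_sum_le_sum_abs _ _).trans (sum_le_sum fun i _ => ?_)
    rw [abs_mul, abs_sub_comm]
    exact mul_le_mul_of_nonneg_left (hg _) (abs_nonneg _)
  rw [hparts, add_mul, add_mul, sum_mul]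
  refine (abs_sub _ _).trans (add_le_add ((abs_sub _ _).trans (add_le_add ?_ ?_)) hvar)
  all_goals rw [abs_mul]; exact mul_le_mul_of_nonneg_left (hg _) (abs_nonneg _)

theorem sum_Ico_le_of_sum_Ico_two_mul_le {f : ℕ → ℝ} (hf : ∀ k, 0 ≤ f k) {A : ℝ} {n : ℕ}
    (hn : 0 < n) (hblock : ∀ j, n ≤ j → ∑ k ∈ Ico j (2 * j), f k ≤ A / j) (M : ℕ) :
    ∑ k ∈ Ico n M, f k ≤ 2 * A / n := by
  have hA : 0 ≤ A / n := (sum_nonneg fun k _ => hf k).trans (hblock n le_rfl)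
  -- the block `[2^j n, 2^(j+1) n)` costs at most `A / (2^j n)`, half of the remaining reserve
  have hdyadic : ∀ j : ℕ, ∑ k ∈ Ico n (2 ^ j * n), f k + 2 * (A / (2 ^ j * n)) ≤ 2 * (A / n) := by
    intro j
    induction j with
    | zero => simp
    | succ j ih =>
      have hnj : n ≤ 2 ^ j * n := Nat.le_mul_of_pos_left n (Nat.two_pow_pos j)
      have hsplit := sum_Ico_consecutive f hnj (show 2 ^ j * n ≤ 2 * (2 ^ j * n) by omega)
      have hb := hblock _ hnj
      rw [show 2 ^ (j + 1) * n = 2 * (2 ^ j * n) by ring, ← hsplit]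
      push_cast at hb
      have : 2 * (A / (2 ^ (j + 1) * n)) = A / (2 ^ j * n) := by rw [pow_succ]; field_simp
      linarith
  have htail : 0 ≤ A / (2 ^ M * n) := by
    rw [div_mul_eq_div_div_swap]
    positivity
  have hM : M ≤ 2 ^ M * n := (Nat.lt_two_pow_self).le.trans (Nat.le_mul_of_pos_right _ hn)
  calc ∑ k ∈ Ico n M, f k ≤ ∑ k ∈ Ico n (2 ^ M * n), f k :=
        sum_le_sum_of_subset_of_nonneg (Ico_subset_Ico le_rfl hM) fun k _ _ => hf k
    _ ≤ 2 * A / n := by linarith [hdyadic M, mul_div_assoc 2 A n]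

theorem norm_tsum_le_of_forall_norm_sum_range_le {E : Type*} [SeminormedAddCommGroup E]
    {f : ℕ → E} {B : ℝ} (hB : 0 ≤ B) (h : ∀ n, ‖∑ i ∈ range n, f i‖ ≤ B) : ‖∑' i, f i‖ ≤ B := by
  by_cases hf : Summable f
  · exact le_of_tendsto' hf.hasSum.tendsto_sum_nat.norm h
  · rwa [tsum_eq_zero_of_not_summable hf, norm_zero]

section

variable {c : ℕ → ℝ} {K ε : ℝ}

theorem nonneg_of_forall_natCast_mul_le (hpos : ∀ n, 0 ≤ c n) {m : ℕ}
    (hε : ∀ k, m ≤ k → k * c k ≤ ε) : 0 ≤ ε :=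
  (mul_nonneg (Nat.cast_nonneg m) (hpos m)).trans (hε m le_rfl)

theorem le_div_of_natCast_mul_le {n k : ℕ} (hn : 0 < n)
    (hε : ∀ k, n ≤ k → k * c k ≤ ε) (hk : n ≤ k) : c k ≤ ε / k :=
  (le_div_iff₀' (by norm_cast; omega)).2 (hε k hk)

theorem abs_sum_Ico_mul_sin_le_of_mul_le (hpos : ∀ n, 0 ≤ c n) {m : ℕ}
    (hε : ∀ k, m ≤ k → k * c k ≤ ε) {x : ℝ} (hx : 0 ≤ x) (M : ℕ) :
    |∑ k ∈ Ico m M, c k * sin (k * x)| ≤ (M - m : ℕ) * (ε * x) := by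
  have hterm : ∀ k ∈ Ico m M, |c k * sin (k * x)| ≤ ε * x := by
    intro k hk
    calc |c k * sin (k * x)| = c k * |sin (k * x)| := by rw [abs_mul, abs_of_nonneg (hpos k)]
      _ ≤ c k * (k * x) :=
          mul_le_mul_of_nonneg_left (abs_sin_le_abs.trans_eq (abs_of_nonneg (by positivity)))
            (hpos k)
      _ = k * c k * x := by ring
      _ ≤ ε * x := by gcongr; exact hε k (mem_Ico.1 hk).1
  calc |∑ k ∈ Ico m M, c k * sin (k * x)| ≤ ∑ k ∈ Ico m M, |c k * sin (k * x)| :=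
        abs_sum_le_sum_abs _ _
    _ ≤ ∑ _k ∈ Ico m M, ε * x := sum_le_sum hterm
    _ = (M - m : ℕ) * (ε * x) := by rw [sum_const, Nat.card_Ico, nsmul_eq_mul]

def IsNBVS (c : ℕ → ℝ) (K : ℝ) : Prop :=
  ∀ m : ℕ, 1 ≤ m → ∑ k ∈ Icc m (2 * m), |c k - c (k + 1)| ≤ K * (c m + c (2 * m))

theorem IsNBVS.mono {K' : ℝ} (hc : IsNBVS c K) (hpos : ∀ n, 0 ≤ c n)
    (hK : K ≤ K') : IsNBVS c K' := fun m hm =>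
  (hc m hm).trans (mul_le_mul_of_nonneg_right hK (add_nonneg (hpos m) (hpos (2 * m))))

theorem IsNBVS.sum_Ico_abs_sub_le (hc : IsNBVS c K) (hK : 0 ≤ K) {n : ℕ} (hn : 0 < n)
    (hε : ∀ k, n ≤ k → k * c k ≤ ε) (M : ℕ) :
    ∑ k ∈ Ico n M, |c k - c (k + 1)| ≤ 3 * K * ε / n := by
  have hblock : ∀ j, n ≤ j → ∑ k ∈ Ico j (2 * j), |c k - c (k + 1)| ≤ 3 * K * ε / 2 / j := by
    intro j hj
    have hj₀ : (0 : ℝ) < j := by norm_cast; omega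
    calc ∑ k ∈ Ico j (2 * j), |c k - c (k + 1)|
        ≤ ∑ k ∈ Icc j (2 * j), |c k - c (k + 1)| :=
          sum_le_sum_of_subset_of_nonneg Ico_subset_Icc_self fun k _ _ => abs_nonneg _
      _ ≤ K * (c j + c (2 * j)) := hc j (by omega)
      _ ≤ K * (ε / j + ε / (2 * j : ℕ)) := by
          gcongr
          exacts [le_div_of_natCast_mul_le hn hε hj, le_div_of_natCast_mul_le hn hε (by omega)]
      _ = 3 * K * ε / 2 / j := by push_cast; field_simp; ring
  have := sum_Ico_le_of_sum_Ico_two_mul_le (fun k => abs_nonneg _) hn hblock M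
  rwa [show 2 * (3 * K * ε / 2) = 3 * K * ε by ring] at this

theorem IsNBVS.abs_sum_Ico_mul_sin_le_of_one_le_mul (hc : IsNBVS c K)
    (hpos : ∀ n, 0 ≤ c n) (hK : 0 ≤ K) {N : ℕ} (hN : 0 < N)
    (hε : ∀ k, N ≤ k → k * c k ≤ ε) {x : ℝ} (hx₀ : 0 < x) (hxπ : x ≤ π) (hNx : 1 ≤ N * x)
    (M : ℕ) : |∑ k ∈ Ico N M, c k * sin (k * x)| ≤ (3 * K + 2) * π * ε := by
  have hN₀ : (0 : ℝ) < N := by exact_mod_cast hN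
  have hε₀ := nonneg_of_forall_natCast_mul_le hpos hε
  rcases le_or_gt M N with hMN | hNM
  · rw [Ico_eq_empty_of_le hMN, sum_empty, abs_zero]
    positivity
  have hlast : c (M - 1) ≤ ε / N :=
    (le_div_of_natCast_mul_le hN hε (by omega)).trans
      (div_le_div_of_nonneg_left hε₀ hN₀ (by exact_mod_cast (by omega : N ≤ M - 1)))
  have hkernel : ∀ n, |∑ k ∈ range n, sin (k * x)| ≤ π / x := fun n => by
    simpa only [range_eq_Ico] using abs_sum_Ico_sin_mul_le hx₀ hxπ 0 n
  calc |∑ k ∈ Ico N M, c k * sin (k * x)|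
      ≤ (|c (M - 1)| + |c N| + ∑ k ∈ Ico N (M - 1), |c k - c (k + 1)|) * (π / x) :=
        abs_sum_Ico_mul_le_of_abs_sum_range_le hkernel hNM
    _ ≤ (ε / N + ε / N + 3 * K * ε / N) * (π / x) := by
        rw [abs_of_nonneg (hpos _), abs_of_nonneg (hpos _)]
        gcongr
        exacts [le_div_of_natCast_mul_le hN hε le_rfl, hc.sum_Ico_abs_sub_le hK hN hε _]
    _ = (3 * K + 2) * π * ε / (N * x) := by field_simp; ring
    _ ≤ (3 * K + 2) * π * ε := div_le_self (by positivity) hNx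

theorem IsNBVS.abs_sum_Ico_mul_sin_le (hc : IsNBVS c K)
    (hpos : ∀ n, 0 ≤ c n) (hK : 0 ≤ K) {m : ℕ} (hm : 0 < m)
    (hε : ∀ k, m ≤ k → k * c k ≤ ε) {x : ℝ} (hx : x ∈ Set.Icc 0 π) (M : ℕ) :
    |∑ k ∈ Ico m M, c k * sin (k * x)| ≤ (1 + (3 * K + 3) * π) * ε := by
  obtain ⟨hx₀, hxπ⟩ := hx
  have hε₀ := nonneg_of_forall_natCast_mul_le hpos hε
  rcases hx₀.eq_or_lt with rfl | hx₀
  · simp only [mul_zero, sin_zero, sum_const_zero, abs_zero]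
    positivity
  set N := max m ⌈1 / x⌉₊
  have hNx : 1 ≤ N * x := by
    rw [← div_le_iff₀ hx₀]
    exact (Nat.le_ceil _).trans (by exact_mod_cast le_max_right _ _)
  have hhead : ∀ M' ≤ N, |∑ k ∈ Ico m M', c k * sin (k * x)| ≤ (1 + π) * ε := by
    intro M' hM'
    refine (abs_sum_Ico_mul_sin_le_of_mul_le hpos hε hx₀.le M').trans ?_
    have hcount : ((M' - m : ℕ) : ℝ) ≤ 1 / x + 1 :=
      (Nat.cast_le.2 (by omega : M' - m ≤ ⌈1 / x⌉₊)).trans (Nat.ceil_lt_add_one (by positivity)).le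
    calc ((M' - m : ℕ) : ℝ) * (ε * x) ≤ (1 / x + 1) * (ε * x) := by gcongr
      _ = (1 + x) * ε := by field_simp
      _ ≤ (1 + π) * ε := by gcongr
  have htail := hc.abs_sum_Ico_mul_sin_le_of_one_le_mul hpos hK (hm.trans_le (le_max_left m _))
    (fun k hk => hε k ((le_max_left m _).trans hk)) hx₀ hxπ hNx M
  rcases le_total M N with hMN | hNM
  · have : 0 ≤ (3 * K + 2) * π * ε := by positivity
    linarith [hhead M hMN]
  · rw [← sum_Ico_consecutive _ (le_max_left m _) hNM]
    refine (abs_add_le _ _).trans ?_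
    linarith [hhead N le_rfl]

end

theorem nbvs_tail_sine_sum_bound (c : ℕ → ℝ) (hpos : ∀ n, 0 ≤ c n) (K : ℝ)
    (hNBVS : ∀ m : ℕ, 1 ≤ m →
      ∑ k ∈ Finset.Icc m (2 * m), |c k - c (k + 1)| ≤ K * (c m + c (2 * m))) :
    ∃ K' : ℝ, 0 < K' ∧ ∀ m : ℕ, 1 ≤ m → ∀ ε : ℝ,
      (∀ k : ℕ, m ≤ k → (k : ℝ) * c k ≤ ε) →
      ∀ x ∈ Set.Icc (0 : ℝ) Real.pi,
        |∑' k : ℕ, c (m + k) * Real.sin ((m + k) * x)| ≤ K' * ε := by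
  have hc : IsNBVS c (max K 0) := IsNBVS.mono hNBVS hpos (le_max_left K 0)
  refine ⟨1 + (3 * max K 0 + 3) * π, by positivity, fun m hm ε hε x hx => ?_⟩
  have hε₀ := nonneg_of_forall_natCast_mul_le hpos hε
  rw [← Real.norm_eq_abs]
  refine norm_tsum_le_of_forall_norm_sum_range_le (by positivity) fun n => ?_
  have h := hc.abs_sum_Ico_mul_sin_le hpos (le_max_right K 0) hm hε hx (m + n)
  rw [sum_Ico_eq_sum_range, Nat.add_sub_cancel_left] at h
  simpa only [Nat.cast_add, Real.norm_eq_abs] using h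
end
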